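/- arXiv:2510.11737 — 4 statements merged into one kernel-verified Lean document; each statement's English description precedes it below -/
import Mathlib

section
/- Let μ > 1 be a real number and let (A_n) be a sequence of nonnegative reals with A_n·(μ−1)/μ^{n+1} → 1 as n → ∞ (the cumulative wrapper count asymptotics). Let O be a countable type of outputs and let m : O → ℕ → ℕ assign to each output o and each core length L the multiplicity m_o(L), such that the total partition sum Z = Σ_{o} Σ_{L≥0} m_o(L)·μ^{−L} is finite and strictly positive. For each cutoff D define N_o(D) = Σ_{L=0}^{D} m_o(L)·A_{D−L} and P_D(o) = N_o(D) / Σ_{o'} N_{o'}(D). Then for every output o, P_D(o) converges as D → ∞ to (Σ_{L≥0} m_o(L)·e^{−γL}) / (Σ_{o'} Σ_{L≥0} m_{o'}(L)·e^{−γL}), where γ = ln μ; i.e., the induced distribution over outputs converges to the Boltzmann-weighted distribution with inverse temperature γ. -/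
open Filter Topology Finset

/-!
Rescaling by `(μ - 1) / μ ^ (D + 1)` turns `N_o(D)` into the truncated convolution
`∑_{L ≤ D} m_o(L) μ^{-L} B(D - L)` of the summable weights `m_o(L) μ^{-L}` with the sequence
`B n = A n (μ - 1) / μ ^ (n + 1)`, which tends to `1`. Dominated convergence, first over `L`
and then over the outputs, shows that numerator and denominator tend to the Boltzmann weight
of `o` and to the partition sum `Z`; the common scaling factor cancels in `P_D(o)`.
-/

section Convolution

variable {f b : ℕ → ℝ} {c : ℝ}

lemma abs_sum_range_mul_sub_le (hf : Summable f) {M : ℝ} (hb : ∀ n, |b n| ≤ M) (D : ℕ) :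
    |∑ L ∈ range (D + 1), f L * b (D - L)| ≤ M * ∑' L, |f L| := by
  have hM : 0 ≤ M := (abs_nonneg _).trans (hb 0)
  calc |∑ L ∈ range (D + 1), f L * b (D - L)|
      ≤ ∑ L ∈ range (D + 1), |f L| * M := by
        refine (abs_sum_le_sum_abs _ _).trans (sum_le_sum fun L _ => ?_)
        rw [abs_mul]
        exact mul_le_mul_of_nonneg_left (hb _) (abs_nonneg _)
    _ = M * ∑ L ∈ range (D + 1), |f L| := by rw [← sum_mul, mul_comm]
    _ ≤ M * ∑' L, |f L| :=
        mul_le_mul_of_nonneg_left (hf.abs.sum_le_tsum _ fun L _ => abs_nonneg _) hM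

lemma tendsto_sum_range_mul_sub (hf : Summable f) (hb : Tendsto b atTop (𝓝 c)) :
    Tendsto (fun D => ∑ L ∈ range (D + 1), f L * b (D - L)) atTop (𝓝 (c * ∑' L, f L)) := by
  obtain ⟨M, hM⟩ := hb.abs.bddAbove_range
  have hbM : ∀ n, |b n| ≤ M := fun n => hM ⟨n, rfl⟩
  let F : ℕ → ℕ → ℝ := fun D L => if L ≤ D then f L * b (D - L) else 0
  have hF : ∀ D, ∑ L ∈ range (D + 1), f L * b (D - L) = ∑' L, F D L := fun D => by
    rw [tsum_eq_sum (s := range (D + 1)) fun L hL => if_neg (by simpa using hL)]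
    exact sum_congr rfl fun L hL => (if_pos (Nat.lt_succ_iff.mp (mem_range.mp hL))).symm
  have hlim : ∀ L, Tendsto (fun D => F D L) atTop (𝓝 (f L * c)) := fun L =>
    ((hb.comp (tendsto_sub_atTop_nat L)).const_mul (f L)).congr'
      (by filter_upwards [eventually_ge_atTop L] with D hD; simp [F, hD])
  have hbound : ∀ D L, ‖F D L‖ ≤ |f L| * M := fun D L => by
    by_cases h : L ≤ D
    · simpa [F, h, abs_mul] using mul_le_mul_of_nonneg_left (hbM _) (abs_nonneg (f L))
    · simpa [F, h] using mul_nonneg (abs_nonneg (f L)) ((abs_nonneg _).trans (hbM 0))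
  rw [← tsum_mul_left]
  simp_rw [hF, mul_comm c]
  exact tendsto_tsum_of_dominated_convergence (hf.abs.mul_right M) hlim
    (Eventually.of_forall hbound)

lemma tendsto_tsum_sum_range_mul_sub {O : Type*} {f : O → ℕ → ℝ}
    (hf : Summable fun p : O × ℕ => f p.1 p.2) (hb : Tendsto b atTop (𝓝 c)) :
    Tendsto (fun D => ∑' o, ∑ L ∈ range (D + 1), f o L * b (D - L)) atTop
      (𝓝 (c * ∑' o, ∑' L, f o L)) := by
  obtain ⟨M, hM⟩ := hb.abs.bddAbove_range
  rw [← tsum_mul_left]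
  exact tendsto_tsum_of_dominated_convergence (hf.abs.prod.mul_left M)
    (fun o => tendsto_sum_range_mul_sub (hf.prod_factor o) hb)
    (Eventually.of_forall fun D o =>
      abs_sum_range_mul_sub_le (hf.prod_factor o) (fun n => hM ⟨n, rfl⟩) D)

end Convolution

lemma sum_range_mul_sub_mul_div_pow {μ : ℝ} (hμ : μ ≠ 0) (g A : ℕ → ℝ) (D : ℕ) :
    (∑ L ∈ range (D + 1), g L * A (D - L)) * ((μ - 1) / μ ^ (D + 1)) =
      ∑ L ∈ range (D + 1), g L * μ⁻¹ ^ L * (A (D - L) * (μ - 1) / μ ^ (D - L + 1)) := by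
  rw [sum_mul]
  refine sum_congr rfl fun L hL => ?_
  have hpow : μ ^ (D + 1) = μ ^ (D - L + 1) * μ ^ L := by
    rw [← pow_add]
    congr 1
    have := mem_range.mp hL
    omega
  rw [hpow, inv_pow]
  field_simp

lemma Real.exp_neg_log_mul_natCast {μ : ℝ} (hμ : 0 < μ) (L : ℕ) :
    Real.exp (-Real.log μ * L) = μ⁻¹ ^ L := by
  rw [neg_mul, Real.exp_neg, mul_comm, Real.exp_nat_mul, Real.exp_log hμ, inv_pow]

theorem emergent_algorithmic_temperature_general
    {O : Type*} (μ : ℝ) (hμ : 1 < μ)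
    (A : ℕ → ℝ)
    (hA : Tendsto (fun n => A n * (μ - 1) / μ ^ (n + 1)) atTop (𝓝 1))
    (m : O → ℕ → ℕ)
    (hZsum : Summable (fun p : O × ℕ => (m p.1 p.2 : ℝ) * μ⁻¹ ^ p.2))
    (hZpos : 0 < ∑' (o : O), ∑' (L : ℕ), (m o L : ℝ) * μ⁻¹ ^ L)
    (o : O) :
    Tendsto
      (fun D : ℕ =>
        (∑ L ∈ Finset.range (D + 1), (m o L : ℝ) * A (D - L)) /
          ∑' (o' : O), ∑ L ∈ Finset.range (D + 1), (m o' L : ℝ) * A (D - L))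
      atTop
      (𝓝 ((∑' (L : ℕ), (m o L : ℝ) * Real.exp (-(Real.log μ) * L)) /
        ∑' (o' : O), ∑' (L : ℕ), (m o' L : ℝ) * Real.exp (-(Real.log μ) * L))) := by
  have hμ0 : 0 < μ := zero_lt_one.trans hμ
  have hscale : ∀ D : ℕ, (μ - 1) / μ ^ (D + 1) ≠ 0 := fun D =>
    div_ne_zero (sub_ne_zero.mpr hμ.ne') (pow_ne_zero _ hμ0.ne')
  have hnum := tendsto_sum_range_mul_sub (f := fun L => (m o L : ℝ) * μ⁻¹ ^ L)
    (hZsum.prod_factor o) hA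
  have hden := tendsto_tsum_sum_range_mul_sub (f := fun o L => (m o L : ℝ) * μ⁻¹ ^ L) hZsum hA
  simp only [← sum_range_mul_sub_mul_div_pow hμ0.ne', one_mul, tsum_mul_right] at hnum hden
  simp only [Real.exp_neg_log_mul_natCast hμ0]
  exact (hnum.div hden hZpos.ne').congr fun D => mul_div_mul_right _ _ (hscale D)

/-- Emergent Algorithmic Temperature (μ > 1, convergent partition sum):
under the cumulative wrapper asymptotics `A_n (μ-1)/μ^{n+1} → 1`, the cutoff
distribution `P_D(o)` converges to the Boltzmann-weighted distribution with
inverse temperature `γ = log μ`. -/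
theorem emergent_algorithmic_temperature
    {O : Type*} [Countable O] (μ : ℝ) (hμ : 1 < μ)
    (A : ℕ → ℝ) (hA0 : ∀ n, 0 ≤ A n)
    (hA : Tendsto (fun n => A n * (μ - 1) / μ ^ (n + 1)) atTop (𝓝 1))
    (m : O → ℕ → ℕ)
    (hZsum : Summable (fun p : O × ℕ => (m p.1 p.2 : ℝ) * μ⁻¹ ^ p.2))
    (hZpos : 0 < ∑' (o : O), ∑' (L : ℕ), (m o L : ℝ) * μ⁻¹ ^ L)
    (o : O) :
    Tendsto
      (fun D : ℕ =>
        (∑ L ∈ Finset.range (D + 1), (m o L : ℝ) * A (D - L)) /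
          ∑' (o' : O), ∑ L ∈ Finset.range (D + 1), (m o' L : ℝ) * A (D - L))
      atTop
      (𝓝 ((∑' (L : ℕ), (m o L : ℝ) * Real.exp (-(Real.log μ) * L)) /
        ∑' (o' : O), ∑' (L : ℕ), (m o' L : ℝ) * Real.exp (-(Real.log μ) * L))) :=
  emergent_algorithmic_temperature_general μ hμ A hA m hZsum hZpos o
end

section
/- Let (A_n) be a sequence of nonnegative reals with A_n/(n+1) → 1 as n → ∞. Let O be a countable type of outputs and let m : O → ℕ → ℕ be multiplicities such that Σ_{o} Σ_{L≥0} m_o(L) is finite and strictly positive. For each cutoff D define N_o(D) = Σ_{L=0}^{D} m_o(L)·A_{D−L} and P_D(o) = N_o(D) / Σ_{o'} N_{o'}(D). Then for every output o, P_D(o) converges as D → ∞ to (Σ_{L≥0} m_o(L)) / (Σ_{o'} Σ_{L≥0} m_{o'}(L)), i.e., the Boltzmann distribution at inverse temperature γ = 0. -/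
/-!
Since `A_n ~ n + 1`, each weighted wrapper count `N_o(D) = Σ_{L ≤ D} m_o(L) A_{D-L}` grows like
`(D + 1) Σ_L m_o(L)`: after dividing by `D + 1`, the term of index `L` tends to `m_o(L)`, and it is
dominated by `C m_o(L)` with `C = sup_n A_n / (n + 1)`, so Tannery's theorem applies, both to a
single output and to the sum over all outputs. The factor `D + 1` cancels in `P_D(o)`.
-/

open Filter Topology Finset

section WrapperConvolution

variable {A : ℕ → ℝ}

theorem tendsto_comp_sub_div_succ {a : ℝ}
    (hA : Tendsto (fun n => A n / (n + 1 : ℝ)) atTop (𝓝 a)) (L : ℕ) :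
    Tendsto (fun D : ℕ => A (D - L) / ((D : ℝ) + 1)) atTop (𝓝 a) := by
  rw [← tendsto_add_atTop_iff_nat L]
  have hratio : Tendsto (fun n : ℕ => ((n + 1 : ℕ) : ℝ) / ((n + 1 : ℕ) + L)) atTop (𝓝 1) :=
    (tendsto_natCast_div_add_atTop (L : ℝ)).comp (tendsto_add_atTop_nat 1)
  refine (mul_one a ▸ hA.mul hratio).congr fun n => ?_
  simp only [Nat.add_sub_cancel]
  push_cast
  field_simp
  ring

theorem comp_sub_div_succ_le (hA0 : ∀ n, 0 ≤ A n) {C : ℝ}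
    (hC : ∀ n : ℕ, A n / (n + 1 : ℝ) ≤ C) (D L : ℕ) :
    A (D - L) / ((D : ℝ) + 1) ≤ C := by
  refine le_trans ?_ (hC (D - L))
  gcongr
  · exact hA0 _
  · exact Nat.sub_le D L

theorem sum_mul_comp_sub_div_succ_le (hA0 : ∀ n, 0 ≤ A n) {C : ℝ}
    (hC : ∀ n : ℕ, A n / (n + 1 : ℝ) ≤ C) {g : ℕ → ℝ} (hg0 : 0 ≤ g) (hg : Summable g)
    (D : ℕ) :
    (∑ L ∈ range (D + 1), g L * A (D - L)) / ((D : ℝ) + 1) ≤ C * ∑' L, g L := by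
  have hC0 : 0 ≤ C := (hA0 0).trans (by simpa using hC 0)
  rw [sum_div]
  calc ∑ L ∈ range (D + 1), g L * A (D - L) / ((D : ℝ) + 1)
      ≤ ∑ L ∈ range (D + 1), C * g L := sum_le_sum fun L _ => by
        rw [mul_div_assoc, mul_comm C]
        exact mul_le_mul_of_nonneg_left (comp_sub_div_succ_le hA0 hC D L) (hg0 L)
    _ = C * ∑ L ∈ range (D + 1), g L := (mul_sum ..).symm
    _ ≤ C * ∑' L, g L := mul_le_mul_of_nonneg_left (hg.sum_le_tsum _ fun L _ => hg0 L) hC0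

theorem tendsto_sum_mul_comp_sub_div_succ (hA0 : ∀ n, 0 ≤ A n) {a : ℝ}
    (hA : Tendsto (fun n => A n / (n + 1 : ℝ)) atTop (𝓝 a)) {g : ℕ → ℝ} (hg0 : 0 ≤ g)
    (hg : Summable g) :
    Tendsto (fun D : ℕ => (∑ L ∈ range (D + 1), g L * A (D - L)) / ((D : ℝ) + 1)) atTop
      (𝓝 (∑' L, g L * a)) := by
  obtain ⟨C, hC⟩ := hA.bddAbove_range
  have hC' : ∀ n : ℕ, A n / (n + 1 : ℝ) ≤ C := fun n => hC (Set.mem_range_self n)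
  have hsum (D : ℕ) : (∑ L ∈ range (D + 1), g L * A (D - L)) / ((D : ℝ) + 1) =
      ∑' L, (range (D + 1) : Set ℕ).indicator (fun L => g L * (A (D - L) / ((D : ℝ) + 1))) L := by
    simp only [sum_div, mul_div_assoc]
    exact sum_eq_tsum_indicator _ _
  simp only [hsum]
  refine tendsto_tsum_of_dominated_convergence (hg.mul_left C) (fun L => ?_) ?_
  · refine ((tendsto_comp_sub_div_succ hA L).const_mul (g L)).congr' ?_
    filter_upwards [eventually_ge_atTop L] with D hD
    rw [Set.indicator_of_mem (by simpa [Nat.lt_succ_iff] using hD)]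
  · refine Eventually.of_forall fun D L => (norm_indicator_le_norm_self _ _).trans ?_
    rw [Real.norm_of_nonneg (mul_nonneg (hg0 L) (div_nonneg (hA0 _) (by positivity))),
      mul_comm C]
    exact mul_le_mul_of_nonneg_left (comp_sub_div_succ_le hA0 hC' D L) (hg0 L)

theorem tendsto_tsum_sum_mul_comp_sub_div_succ {O : Type*} (hA0 : ∀ n, 0 ≤ A n) {a : ℝ}
    (hA : Tendsto (fun n => A n / (n + 1 : ℝ)) atTop (𝓝 a)) {m : O → ℕ → ℝ} (hm0 : 0 ≤ m)
    (hm : Summable fun p : O × ℕ => m p.1 p.2) :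
    Tendsto (fun D : ℕ => ∑' o, (∑ L ∈ range (D + 1), m o L * A (D - L)) / ((D : ℝ) + 1))
      atTop (𝓝 (∑' o, ∑' L, m o L * a)) := by
  obtain ⟨C, hC⟩ := hA.bddAbove_range
  have hC' : ∀ n : ℕ, A n / (n + 1 : ℝ) ≤ C := fun n => hC (Set.mem_range_self n)
  have hrows : Summable fun o => ∑' L, m o L :=
    ((summable_prod_of_nonneg fun p => hm0 p.1 p.2).mp hm).2
  refine tendsto_tsum_of_dominated_convergence (hrows.mul_left C)
    (fun o => tendsto_sum_mul_comp_sub_div_succ hA0 hA (hm0 o) (hm.prod_factor o)) ?_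
  refine Eventually.of_forall fun D o => ?_
  have hnonneg : 0 ≤ ∑ L ∈ range (D + 1), m o L * A (D - L) :=
    sum_nonneg fun L _ => mul_nonneg (hm0 o L) (hA0 _)
  rw [Real.norm_of_nonneg (div_nonneg hnonneg (by positivity))]
  exact sum_mul_comp_sub_div_succ_le hA0 hC' (hm0 o) (hm.prod_factor o) D

end WrapperConvolution

theorem emergent_algorithmic_temperature_mu_one_general
    {O : Type*}
    (A : ℕ → ℝ) (hA0 : ∀ n, 0 ≤ A n)
    (hA : Tendsto (fun n => A n / (n + 1 : ℝ)) atTop (𝓝 1))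
    (m : O → ℕ → ℕ)
    (hZsum : Summable (fun p : O × ℕ => (m p.1 p.2 : ℝ)))
    (hZpos : 0 < ∑' (o : O), ∑' (L : ℕ), (m o L : ℝ))
    (o : O) :
    Tendsto
      (fun D : ℕ =>
        (∑ L ∈ Finset.range (D + 1), (m o L : ℝ) * A (D - L)) /
          ∑' (o' : O), ∑ L ∈ Finset.range (D + 1), (m o' L : ℝ) * A (D - L))
      atTop
      (𝓝 ((∑' (L : ℕ), (m o L : ℝ)) /
        ∑' (o' : O), ∑' (L : ℕ), (m o' L : ℝ))) := by
  have hm0 : 0 ≤ fun o L => (m o L : ℝ) := fun _ _ => Nat.cast_nonneg _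
  have hnum := tendsto_sum_mul_comp_sub_div_succ hA0 hA (hm0 o) (hZsum.prod_factor o)
  have hden := tendsto_tsum_sum_mul_comp_sub_div_succ hA0 hA hm0 hZsum
  simp only [mul_one] at hnum hden
  refine (hnum.div hden hZpos.ne').congr fun D => ?_
  rw [Pi.div_apply, tsum_div_const, div_div_div_cancel_right₀ (by positivity)]

/-- Emergent Algorithmic Temperature, μ = 1 case (zero inverse temperature):
if `A_n/(n+1) → 1` and the total multiplicity is finite and positive, then
the cutoff distribution `P_D(o)` converges to the Boltzmann distribution at
inverse temperature `γ = 0`, i.e. to `(Σ_L m_o(L)) / (Σ_{o'} Σ_L m_{o'}(L))`. -/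
theorem emergent_algorithmic_temperature_mu_one
    {O : Type*} [Countable O]
    (A : ℕ → ℝ) (hA0 : ∀ n, 0 ≤ A n)
    (hA : Tendsto (fun n => A n / (n + 1 : ℝ)) atTop (𝓝 1))
    (m : O → ℕ → ℕ)
    (hZsum : Summable (fun p : O × ℕ => (m p.1 p.2 : ℝ)))
    (hZpos : 0 < ∑' (o : O), ∑' (L : ℕ), (m o L : ℝ))
    (o : O) :
    Tendsto
      (fun D : ℕ =>
        (∑ L ∈ Finset.range (D + 1), (m o L : ℝ) * A (D - L)) /
          ∑' (o' : O), ∑ L ∈ Finset.range (D + 1), (m o' L : ℝ) * A (D - L))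
      atTop
      (𝓝 ((∑' (L : ℕ), (m o L : ℝ)) /
        ∑' (o' : O), ∑' (L : ℕ), (m o' L : ℝ))) :=
  emergent_algorithmic_temperature_mu_one_general A hA0 hA m hZsum hZpos o
end

section
/- Let O be a countable type of outputs and let m : O → ℕ → ℕ be multiplicities such that Z = Σ_{o} Σ_{L≥0} m_o(L)·2^{−L} is finite and strictly positive. Define A_n = 2^{n+1} − 1 (the number of binary strings of length at most n), N_o(D) = Σ_{L=0}^{D} m_o(L)·A_{D−L}, and P_D(o) = N_o(D)/Σ_{o'} N_{o'}(D). Then for every output o, P_D(o) converges as D → ∞ to (Σ_{L≥0} m_o(L)·2^{−L}) / Z, i.e., the induced distribution over outputs converges to the Solomonoff universal distribution P(o) ∝ Σ_{L≥0} m_o(L)·2^{−L}. -/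
/-!
Write `A (D - L) = 2 ^ (D - L + 1) - 1 = 2 ^ (D + 1) * (2⁻¹ ^ L - 2⁻¹ ^ (D + 1))` for `L ≤ D`.
The common factor `2 ^ (D + 1)` cancels in `P_D(o)`, which becomes a ratio of two series whose
terms `m_o(L) * (2⁻¹ ^ L - 2⁻¹ ^ (D + 1))` increase to `m_o(L) * 2⁻¹ ^ L` and are dominated by
these limits. Dominated convergence for series (Tannery's theorem) gives convergence of the
numerator and of the denominator, and the limit of the denominator is `Z > 0`.
-/

open Filter Topology

noncomputable def cutoffWeight (D L : ℕ) : ℝ :=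
  if L ≤ D then (2 : ℝ)⁻¹ ^ L - (2 : ℝ)⁻¹ ^ (D + 1) else 0

lemma cutoffWeight_nonneg (D L : ℕ) : 0 ≤ cutoffWeight D L := by
  unfold cutoffWeight
  split_ifs with hLD
  · exact sub_nonneg.2 (pow_le_pow_of_le_one (by norm_num) (by norm_num) (by omega))
  · exact le_rfl

lemma cutoffWeight_le (D L : ℕ) : cutoffWeight D L ≤ (2 : ℝ)⁻¹ ^ L := by
  unfold cutoffWeight
  split_ifs
  · exact sub_le_self _ (by positivity)
  · positivity

lemma tendsto_cutoffWeight (L : ℕ) :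
    Tendsto (cutoffWeight · L) atTop (𝓝 ((2 : ℝ)⁻¹ ^ L)) := by
  have hlim : Tendsto (fun D : ℕ => (2 : ℝ)⁻¹ ^ L - (2 : ℝ)⁻¹ ^ (D + 1)) atTop
      (𝓝 ((2 : ℝ)⁻¹ ^ L - 0)) :=
    ((tendsto_pow_atTop_nhds_zero_of_lt_one (by norm_num) (by norm_num)).comp
      (tendsto_add_atTop_nat 1)).const_sub _
  rw [sub_zero] at hlim
  refine hlim.congr' ?_
  filter_upwards [eventually_ge_atTop L] with D hLD
  simp only [cutoffWeight, if_pos hLD]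

lemma two_pow_mul_cutoffWeight {D L : ℕ} (hLD : L ≤ D) :
    (2 : ℝ) ^ (D + 1) * cutoffWeight D L = 2 ^ (D - L + 1) - 1 := by
  have hsplit : (2 : ℝ) ^ (D + 1) = 2 ^ (D - L + 1) * 2 ^ L := by
    rw [← pow_add]; congr 1; omega
  rw [cutoffWeight, if_pos hLD, mul_sub, ← mul_pow, hsplit, mul_assoc, ← mul_pow]
  norm_num

lemma sum_range_mul_two_pow_sub_one (c : ℕ → ℝ) (D : ℕ) :
    ∑ L ∈ Finset.range (D + 1), c L * (2 ^ (D - L + 1) - 1) =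
      2 ^ (D + 1) * ∑' L, c L * cutoffWeight D L := by
  have hsupp : ∀ L ∉ Finset.range (D + 1), c L * cutoffWeight D L = 0 := fun L hL => by
    rw [Finset.mem_range] at hL
    simp only [cutoffWeight, if_neg (by omega : ¬ L ≤ D), mul_zero]
  rw [tsum_eq_sum hsupp, Finset.mul_sum]
  refine Finset.sum_congr rfl fun L hL => ?_
  rw [← two_pow_mul_cutoffWeight (Nat.lt_succ_iff.1 (Finset.mem_range.1 hL))]
  ring

section Series

variable {β : Type*} {c : β → ℝ} (ℓ : β → ℕ)

lemma norm_mul_cutoffWeight_le (hc : 0 ≤ c) (D : ℕ) (b : β) :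
    ‖c b * cutoffWeight D (ℓ b)‖ ≤ c b * (2 : ℝ)⁻¹ ^ ℓ b := by
  rw [Real.norm_of_nonneg (mul_nonneg (hc b) (cutoffWeight_nonneg _ _))]
  exact mul_le_mul_of_nonneg_left (cutoffWeight_le _ _) (hc b)

lemma summable_mul_cutoffWeight (hc : 0 ≤ c)
    (hs : Summable fun b => c b * (2 : ℝ)⁻¹ ^ ℓ b) (D : ℕ) :
    Summable fun b => c b * cutoffWeight D (ℓ b) :=
  hs.of_norm_bounded (norm_mul_cutoffWeight_le ℓ hc D)

lemma tendsto_tsum_mul_cutoffWeight (hc : 0 ≤ c)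
    (hs : Summable fun b => c b * (2 : ℝ)⁻¹ ^ ℓ b) :
    Tendsto (fun D => ∑' b, c b * cutoffWeight D (ℓ b)) atTop
      (𝓝 (∑' b, c b * (2 : ℝ)⁻¹ ^ ℓ b)) :=
  tendsto_tsum_of_dominated_convergence hs
    (fun b => (tendsto_cutoffWeight (ℓ b)).const_mul (c b))
    (Eventually.of_forall (norm_mul_cutoffWeight_le ℓ hc))

end Series

theorem solomonoff_limit_general
    {O : Type*}
    (m : O → ℕ → ℕ)
    (hZsum : Summable (fun p : O × ℕ => (m p.1 p.2 : ℝ) * (2 : ℝ)⁻¹ ^ p.2))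
    (hZpos : 0 < ∑' (o : O), ∑' (L : ℕ), (m o L : ℝ) * (2 : ℝ)⁻¹ ^ L)
    (A : ℕ → ℝ) (hA : ∀ n, A n = 2 ^ (n + 1) - 1)
    (o : O) :
    Tendsto
      (fun D : ℕ =>
        (∑ L ∈ Finset.range (D + 1), (m o L : ℝ) * A (D - L)) /
          ∑' (o' : O), ∑ L ∈ Finset.range (D + 1), (m o' L : ℝ) * A (D - L))
      atTop
      (𝓝 ((∑' (L : ℕ), (m o L : ℝ) * (2 : ℝ)⁻¹ ^ L) /
        ∑' (o' : O), ∑' (L : ℕ), (m o' L : ℝ) * (2 : ℝ)⁻¹ ^ L)) := by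
  have hm : 0 ≤ fun p : O × ℕ => (m p.1 p.2 : ℝ) := fun _ => Nat.cast_nonneg _
  have hN (o' : O) (D : ℕ) : ∑ L ∈ Finset.range (D + 1), (m o' L : ℝ) * A (D - L) =
      2 ^ (D + 1) * ∑' L, (m o' L : ℝ) * cutoffWeight D L := by
    simp only [hA, sum_range_mul_two_pow_sub_one]
  have hnum := tendsto_tsum_mul_cutoffWeight id (fun L => hm (o, L)) (hZsum.prod_factor o)
  have hden := tendsto_tsum_mul_cutoffWeight Prod.snd hm hZsum
  rw [hZsum.tsum_prod] at hden
  refine (hnum.div hden hZpos.ne').congr fun D => ?_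
  rw [hN, tsum_congr (hN · D), tsum_mul_left,
    ← (summable_mul_cutoffWeight Prod.snd hm hZsum D).tsum_prod,
    mul_div_mul_left _ _ (by positivity)]
  rfl

/-- Solomonoff's universal distribution as the minimum-temperature binary case:
with the full binary wrapper language, `A_n = 2^{n+1} - 1`, the cutoff
distribution `P_D(o)` converges to `(Σ_L m_o(L) 2^{-L}) / Z`. -/
theorem solomonoff_limit
    {O : Type*} [Countable O]
    (m : O → ℕ → ℕ)
    (hZsum : Summable (fun p : O × ℕ => (m p.1 p.2 : ℝ) * (2 : ℝ)⁻¹ ^ p.2))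
    (hZpos : 0 < ∑' (o : O), ∑' (L : ℕ), (m o L : ℝ) * (2 : ℝ)⁻¹ ^ L)
    (A : ℕ → ℝ) (hA : ∀ n, A n = 2 ^ (n + 1) - 1)
    (o : O) :
    Tendsto
      (fun D : ℕ =>
        (∑ L ∈ Finset.range (D + 1), (m o L : ℝ) * A (D - L)) /
          ∑' (o' : O), ∑ L ∈ Finset.range (D + 1), (m o' L : ℝ) * A (D - L))
      atTop
      (𝓝 ((∑' (L : ℕ), (m o L : ℝ) * (2 : ℝ)⁻¹ ^ L) /
        ∑' (o' : O), ∑' (L : ℕ), (m o' L : ℝ) * (2 : ℝ)⁻¹ ^ L)) :=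
  solomonoff_limit_general m hZsum hZpos A hA o
end

section
/- Let μ > 1 and let (A_n) be nonnegative reals with A_n·(μ−1)/μ^{n+1} → 1 as n → ∞. Let f, g : ℕ → ℝ be nonnegative with S_f = Σ_{L≥0} f(L)·μ^{−L} and S_g = Σ_{L≥0} g(L)·μ^{−L} both finite and S_g > 0. Then the ratio (Σ_{L=0}^{D} f(L)·A_{D−L}) / (Σ_{L=0}^{D} g(L)·A_{D−L}) converges to S_f/S_g as D → ∞. -/
/-!
Multiplying the convolution `∑_{L ≤ D} f L * A (D - L)` by `(μ - 1) / μ ^ (D + 1)` turns it into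
`∑_{L ≤ D} (f L * μ⁻¹ ^ L) * B (D - L)` with `B n = A n * (μ - 1) / μ ^ (n + 1) → 1`. Since the weights
`f L * μ⁻¹ ^ L` are summable, dominated convergence (Tannery) sends this to `S_f`, and likewise for `g`.
The common normalisation `(μ - 1) / μ ^ (D + 1)` cancels in the ratio.
-/

open Filter Topology Finset

theorem tendsto_sum_range_mul_sub_of_summable_norm {R : Type*} [NormedRing R] [CompleteSpace R]
    {a B : ℕ → R} {b : R} (ha : Summable (‖a ·‖)) (hB : Tendsto B atTop (𝓝 b)) :
    Tendsto (fun D => ∑ L ∈ range (D + 1), a L * B (D - L)) atTop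
      (𝓝 ((∑' L, a L) * b)) := by
  obtain ⟨C, hC⟩ : ∃ C, ∀ n, ‖B n‖ ≤ C := by
    obtain ⟨C, hC⟩ := hB.norm.bddAbove_range
    exact ⟨C, fun n => hC ⟨n, rfl⟩⟩
  set F : ℕ → ℕ → R := fun D L => if L ≤ D then a L * B (D - L) else 0
  have hsum_eq : ∀ D, ∑ L ∈ range (D + 1), a L * B (D - L) = ∑' L, F D L := fun D => by
    rw [tsum_eq_sum (s := range (D + 1)) fun L hL => if_neg (by simpa using hL)]
    exact sum_congr rfl fun L hL => (if_pos (by simpa [Nat.lt_succ_iff] using hL)).symm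
  have hF_lim : ∀ L, Tendsto (F · L) atTop (𝓝 (a L * b)) := fun L =>
    ((hB.comp (tendsto_sub_atTop_nat L)).const_mul (a L)).congr'
      (by filter_upwards [eventually_ge_atTop L] with D hD; simp [F, hD])
  have hF_bound : ∀ D L, ‖F D L‖ ≤ ‖a L‖ * C := fun D L => by
    by_cases hLD : L ≤ D
    · simpa [F, hLD] using (norm_mul_le _ _).trans (by gcongr; exact hC _)
    · simpa [F, hLD] using mul_nonneg (norm_nonneg _) ((norm_nonneg _).trans (hC 0))
  rw [← ha.of_norm.tsum_mul_right]
  simpa only [hsum_eq] using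
    tendsto_tsum_of_dominated_convergence (ha.mul_right C) hF_lim (Eventually.of_forall hF_bound)

theorem sum_range_mul_sub_mul_div_pow_succ {μ : ℝ} (hμ : μ ≠ 0) (h A : ℕ → ℝ) (D : ℕ) :
    (∑ L ∈ range (D + 1), h L * A (D - L)) * ((μ - 1) / μ ^ (D + 1)) =
      ∑ L ∈ range (D + 1), h L * μ⁻¹ ^ L * (A (D - L) * (μ - 1) / μ ^ (D - L + 1)) := by
  rw [sum_mul]
  refine sum_congr rfl fun L hL => ?_
  have hpow : μ ^ (D + 1) = μ ^ L * μ ^ (D - L + 1) := by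
    rw [← pow_add]; congr 1; have := mem_range.mp hL; omega
  rw [hpow, inv_pow]
  field_simp

theorem tendsto_sum_range_mul_sub_mul_div_pow_succ {μ : ℝ} (hμ : μ ≠ 0) {A h : ℕ → ℝ}
    (hA : Tendsto (fun n => A n * (μ - 1) / μ ^ (n + 1)) atTop (𝓝 1))
    (hS : Summable (fun L => h L * μ⁻¹ ^ L)) :
    Tendsto (fun D => (∑ L ∈ range (D + 1), h L * A (D - L)) * ((μ - 1) / μ ^ (D + 1))) atTop
      (𝓝 (∑' L, h L * μ⁻¹ ^ L)) := by
  have hconv := tendsto_sum_range_mul_sub_of_summable_norm (a := fun L => h L * μ⁻¹ ^ L)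
    hS.norm hA
  rw [mul_one] at hconv
  exact hconv.congr fun D => (sum_range_mul_sub_mul_div_pow_succ hμ h A D).symm

theorem convolution_ratio_limit_general (μ : ℝ) (hμ : 1 < μ)
    (A : ℕ → ℝ)
    (hA : Tendsto (fun n => A n * (μ - 1) / μ ^ (n + 1)) atTop (𝓝 1))
    (f g : ℕ → ℝ)
    (hSf : Summable (fun L => f L * μ⁻¹ ^ L))
    (hSg : Summable (fun L => g L * μ⁻¹ ^ L))
    (hSgpos : 0 < ∑' (L : ℕ), g L * μ⁻¹ ^ L) :
    Tendsto
      (fun D : ℕ =>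
        (∑ L ∈ Finset.range (D + 1), f L * A (D - L)) /
          ∑ L ∈ Finset.range (D + 1), g L * A (D - L))
      atTop
      (𝓝 ((∑' (L : ℕ), f L * μ⁻¹ ^ L) / ∑' (L : ℕ), g L * μ⁻¹ ^ L)) := by
  have hμ0 : μ ≠ 0 := (zero_lt_one.trans hμ).ne'
  have hnum := tendsto_sum_range_mul_sub_mul_div_pow_succ hμ0 hA hSf
  have hden := tendsto_sum_range_mul_sub_mul_div_pow_succ hμ0 hA hSg
  refine (hnum.div hden hSgpos.ne').congr fun D => ?_
  have hnorm : (μ - 1) / μ ^ (D + 1) ≠ 0 := by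
    have := sub_pos.mpr hμ
    positivity
  exact mul_div_mul_right _ _ hnorm

/-- Cancellation step: under the wrapper asymptotics `A_n (μ-1)/μ^{n+1} → 1`,
the ratio of convolutions `Σ f(L) A_{D-L} / Σ g(L) A_{D-L}` converges to
`S_f / S_g` where `S_f = Σ_L f(L) μ^{-L}` and `S_g = Σ_L g(L) μ^{-L}`. -/
theorem convolution_ratio_limit (μ : ℝ) (hμ : 1 < μ)
    (A : ℕ → ℝ) (hA0 : ∀ n, 0 ≤ A n)
    (hA : Tendsto (fun n => A n * (μ - 1) / μ ^ (n + 1)) atTop (𝓝 1))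
    (f g : ℕ → ℝ) (hf0 : ∀ L, 0 ≤ f L) (hg0 : ∀ L, 0 ≤ g L)
    (hSf : Summable (fun L => f L * μ⁻¹ ^ L))
    (hSg : Summable (fun L => g L * μ⁻¹ ^ L))
    (hSgpos : 0 < ∑' (L : ℕ), g L * μ⁻¹ ^ L) :
    Tendsto
      (fun D : ℕ =>
        (∑ L ∈ Finset.range (D + 1), f L * A (D - L)) /
          ∑ L ∈ Finset.range (D + 1), g L * A (D - L))
      atTop
      (𝓝 ((∑' (L : ℕ), f L * μ⁻¹ ^ L) / ∑' (L : ℕ), g L * μ⁻¹ ^ L)) :=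
  convolution_ratio_limit_general μ hμ A hA f g hSf hSg hSgpos
end
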